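/- arXiv:1709.06697 — 5 statements merged into one kernel-verified Lean document; each statement's English description precedes it below -/
import Mathlib

section
/- Let Ω/k be a finite Galois extension of fields whose Galois group is abelian, and let A and B be intermediate fields of Ω/k such that A·B = Ω and A ∩ B = k. Let K be any intermediate field of Ω/k and set E := (K·B) ∩ A. Then [K:k] = [E:k]·[(K ∩ B):k]. -/
/-!
Under the Galois correspondence the degree `[F:k]` is the index of the fixing subgroup `H_F`,
composita go to intersections and intersections to joins, so the claim becomes the index identity
`[G : H_K] = [G : (H_K ⊓ H_B) ⊔ H_A] · [G : H_K ⊔ H_B]` in the abelian group `G = Gal(Ω/k)`.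
For a normal subgroup `N` one has `[G : H ⊓ N] · [G : H ⊔ N] = [G : H] · [G : N]`; applying this
to the pairs `(A, B)`, `(K ⊓ B, A)` and `(K, B)`, and using `H_A ⊓ H_B = ⊥`, `H_A ⊔ H_B = ⊤`,
gives the identity after cancelling `|G|`.
-/

namespace Subgroup

variable {G : Type*} [Group G]

theorem index_inf_mul_index_sup (H N : Subgroup G) [N.Normal] :
    (H ⊓ N).index * (H ⊔ N).index = H.index * N.index := by
  rw [← relIndex_mul_index (inf_le_left : H ⊓ N ≤ H), inf_relIndex_left,
    ← relIndex_mul_index (le_sup_right : N ≤ H ⊔ N), relIndex_sup_right]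
  ring

theorem index_eq_index_inf_sup_mul_index_sup [Finite G] {A B : Subgroup G} [A.Normal] [B.Normal]
    (hsup : A ⊔ B = ⊤) (hinf : A ⊓ B = ⊥) (K : Subgroup G) :
    K.index = (K ⊓ B ⊔ A).index * (K ⊔ B).index := by
  have hAB := index_inf_mul_index_sup A B
  rw [hinf, hsup, index_top, mul_one] at hAB
  have hKBA : K ⊓ B ⊓ A = ⊥ :=
    eq_bot_iff.2 (hinf ▸ le_inf inf_le_right (inf_le_left.trans inf_le_right))
  have hE := index_inf_mul_index_sup (K ⊓ B) A
  rw [hKBA] at hE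
  have hKB := index_inf_mul_index_sup K B
  refine Nat.eq_of_mul_eq_mul_left (index_ne_zero_of_finite (H := (⊥ : Subgroup G))).bot_lt ?_
  calc (⊥ : Subgroup G).index * K.index = A.index * (K.index * B.index) := by rw [hAB]; ring
    _ = A.index * ((K ⊓ B).index * (K ⊔ B).index) := by rw [hKB]
    _ = (⊥ : Subgroup G).index * ((K ⊓ B ⊔ A).index * (K ⊔ B).index) := by
      rw [← mul_assoc, mul_comm A.index, ← hE, mul_assoc]

end Subgroup

theorem IntermediateField.fixingSubgroup_inf {k Ω : Type*} [Field k] [Field Ω] [Algebra k Ω]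
    [FiniteDimensional k Ω] [IsGalois k Ω] (F₁ F₂ : IntermediateField k Ω) :
    (F₁ ⊓ F₂).fixingSubgroup = F₁.fixingSubgroup ⊔ F₂.fixingSubgroup :=
  IsGalois.intermediateFieldEquivSubgroup.map_inf F₁ F₂

/-- Let `Ω/k` be a finite Galois extension with abelian Galois group,
and `A`, `B` intermediate fields with `A·B = Ω` and `A ∩ B = k`. For any intermediate
field `K`, setting `E := (K·B) ∩ A`, we have `[K:k] = [E:k]·[(K ∩ B):k]`. -/
theorem degree_eq_degree_mul_degree_of_galois_correspondence
    (k Ω : Type*) [Field k] [Field Ω] [Algebra k Ω]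
    [FiniteDimensional k Ω] [IsGalois k Ω]
    (habel : ∀ σ τ : Ω ≃ₐ[k] Ω, σ * τ = τ * σ)
    (A B : IntermediateField k Ω) (hsup : A ⊔ B = ⊤) (hinf : A ⊓ B = ⊥)
    (K : IntermediateField k Ω) :
    Module.finrank k K =
      Module.finrank k ((K ⊔ B) ⊓ A : IntermediateField k Ω) *
        Module.finrank k (K ⊓ B : IntermediateField k Ω) := by
  have : IsMulCommutative (Ω ≃ₐ[k] Ω) := ⟨⟨habel⟩⟩
  have hfix_sup : A.fixingSubgroup ⊔ B.fixingSubgroup = ⊤ := by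
    rw [← IntermediateField.fixingSubgroup_inf, hinf, IntermediateField.fixingSubgroup_bot]
  have hfix_inf : A.fixingSubgroup ⊓ B.fixingSubgroup = ⊥ := by
    rw [← IntermediateField.fixingSubgroup_sup, hsup, IntermediateField.fixingSubgroup_top]
  simp only [IntermediateField.finrank_eq_fixingSubgroup_index,
    IntermediateField.fixingSubgroup_inf, IntermediateField.fixingSubgroup_sup]
  exact Subgroup.index_eq_index_inf_sup_mul_index_sup hfix_sup hfix_inf _
end

section
/- Let Ω/k be a finite Galois extension of fields whose Galois group is abelian, and let A and B be intermediate fields of Ω/k such that A·B = Ω and A ∩ B = k. Let K₁ and K₂ be intermediate fields of Ω/k, and set E_i := (K_i·B) ∩ A for i = 1,2 and E := ((K₁·K₂)·B) ∩ A. Then E = E₁·E₂. -/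
/-!
The Galois correspondence is an order anti-isomorphism between intermediate fields and subgroups
of the abelian group `Gal(Ω/k)`, whose subgroup lattice is modular; so the lattice of intermediate
fields is modular. In a modular lattice with `A ⊔ B = ⊤`, the map `x ↦ (x ⊔ B) ⊓ A` preserves
binary joins, since `B ⊔ (x ⊔ B) ⊓ A = (B ⊔ A) ⊓ (x ⊔ B) = x ⊔ B`.
-/

theorem OrderIso.isModularLattice {α β : Type*} [Lattice α] [Lattice β] [IsModularLattice β]
    (e : α ≃o β) : IsModularLattice α :=
  ⟨fun {x} y {z} hxz => by
    rw [← e.le_iff_le, e.map_inf, e.map_sup, e.map_sup, e.map_inf]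
    exact IsModularLattice.sup_inf_le_assoc_of_le (e y) (e.monotone hxz)⟩

theorem sup_sup_inf_eq_of_codisjoint {α : Type*} [Lattice α] [BoundedOrder α] [IsModularLattice α]
    {a b : α} (h : Codisjoint a b) (x y : α) :
    (x ⊔ y ⊔ b) ⊓ a = (x ⊔ b) ⊓ a ⊔ (y ⊔ b) ⊓ a := by
  have absorb : b ⊔ (x ⊔ b) ⊓ a = x ⊔ b := by
    rw [inf_comm, ← sup_inf_assoc_of_le a le_sup_right, sup_comm b a, h.eq_top, top_inf_eq]
  calc (x ⊔ y ⊔ b) ⊓ a = ((x ⊔ b) ⊓ a ⊔ (y ⊔ b)) ⊓ a := by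
        rw [sup_comm _ (y ⊔ b), sup_assoc y b, absorb]; ac_rfl
    _ = (x ⊔ b) ⊓ a ⊔ (y ⊔ b) ⊓ a := IsModularLattice.inf_sup_inf_assoc.symm

theorem inf_compositum_distrib_of_galois_correspondence_general
    (k Ω : Type*) [Field k] [Field Ω] [Algebra k Ω]
    [FiniteDimensional k Ω] [IsGalois k Ω]
    (habel : ∀ σ τ : Ω ≃ₐ[k] Ω, σ * τ = τ * σ)
    (A B : IntermediateField k Ω) (hsup : A ⊔ B = ⊤)
    (K₁ K₂ : IntermediateField k Ω) :
    ((K₁ ⊔ K₂) ⊔ B) ⊓ A = ((K₁ ⊔ B) ⊓ A) ⊔ ((K₂ ⊔ B) ⊓ A) := by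
  let _ : CommGroup (Ω ≃ₐ[k] Ω) := { mul_comm := habel }
  have := (IsGalois.intermediateFieldEquivSubgroup (F := k) (E := Ω)).isModularLattice
  exact sup_sup_inf_eq_of_codisjoint (codisjoint_iff.mpr hsup) K₁ K₂

/-- Let `Ω/k` be a finite Galois extension with abelian Galois group,
and `A`, `B` intermediate fields with `A·B = Ω` and `A ∩ B = k`. For intermediate
fields `K₁`, `K₂`, setting `Eᵢ := (Kᵢ·B) ∩ A` and `E := ((K₁·K₂)·B) ∩ A`, we have
`E = E₁·E₂`. -/
theorem inf_compositum_distrib_of_galois_correspondence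
    (k Ω : Type*) [Field k] [Field Ω] [Algebra k Ω]
    [FiniteDimensional k Ω] [IsGalois k Ω]
    (habel : ∀ σ τ : Ω ≃ₐ[k] Ω, σ * τ = τ * σ)
    (A B : IntermediateField k Ω) (hsup : A ⊔ B = ⊤) (hinf : A ⊓ B = ⊥)
    (K₁ K₂ : IntermediateField k Ω) :
    ((K₁ ⊔ K₂) ⊔ B) ⊓ A = ((K₁ ⊔ B) ⊓ A) ⊔ ((K₂ ⊔ B) ⊓ A) :=
  inf_compositum_distrib_of_galois_correspondence_general k Ω habel A B hsup K₁ K₂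
end

section
/- Let q be a prime power and t ≥ 2 a divisor of q−1. Let P₁,…,P_r be distinct monic irreducible polynomials in 𝔽_q[T], let α₁,…,α_r be integers with 1 ≤ α_i ≤ t−1, let D = P₁^{α₁}⋯P_r^{α_r} and γ = (−1)^{deg D}. Assume X^t − γD is irreducible over k = 𝔽_q(T), and let K = k(β) where β is a root of X^t − γD in a fixed algebraic closure Ω of k. Fix i, set d_i = gcd(t,α_i) and γ_i = (−1)^{(α_i/d_i)·deg P_i}, and let ξ_i ∈ Ω be a root of X^{t/d_i} − γ_i·P_i^{α_i/d_i}. Then the extension K(ξ_i)/K is unramified over P_i: every prime of the integral closure of 𝔽_q[T] in K(ξ_i) lying over P_i has ramification index 1 over the prime of O_K below it. -/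
open Polynomial

/-- The natural map between integral closures induced by an algebra tower. -/
noncomputable def icMap (R A B : Type*) [CommRing R] [CommRing A] [CommRing B]
    [Algebra R A] [Algebra R B] [Algebra A B] [IsScalarTower R A B] :
    integralClosure R A →+* integralClosure R B where
  toFun x := ⟨algebraMap A B x.1, IsIntegral.map (IsScalarTower.toAlgHom R A B) x.2⟩
  map_one' := by ext; simp
  map_mul' x y := by ext; simp
  map_zero' := by ext; simp
  map_add' x y := by ext; simp

/-- The inclusion of rings of integers (integral closures of `𝔽_q[T]`) attached to an
intermediate field `K` of an extension `L` of `k = 𝔽_q(T)`. -/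
noncomputable def icMapIF (Fq L : Type*) [Field Fq] [Field L]
    [Algebra (Polynomial Fq) L] [Algebra (RatFunc Fq) L]
    [IsScalarTower (Polynomial Fq) (RatFunc Fq) L]
    (K : IntermediateField (RatFunc Fq) L) :
    integralClosure (Polynomial Fq) K →+* integralClosure (Polynomial Fq) L :=
  haveI : IsScalarTower (Polynomial Fq) (↥K) L := IsScalarTower.of_algebraMap_eq fun _ => rfl
  icMap (Polynomial Fq) K L

/-- The ramification index of `P` over `p` along a ring hom `f` (the pre-2025 Mathlib
`Ideal.ramificationIdx f p P`). -/
noncomputable def ramificationIdxOfHom {R S : Type*} [CommRing R] [CommRing S] (f : R →+* S)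
    (p : Ideal R) (P : Ideal S) : ℕ :=
  sSup {n | Ideal.map f p ≤ P ^ n}

/-!
Write `D = P_i^{α_i} E` with `P_i ∤ E`, and put `n = t / d_i`, `m = α_i / d_i`, so that
`m t = α_i n`. The element `θ = ξ E / β` satisfies `θ^{nt} = γ^{-n} γ_i^t E^{n(t-1)}`; hence `θ` is
integral over `𝔽_q[T]` and lies outside every prime `𝔮` above `P_i`. Moreover `θ^n ∈ K` and
`L = K(θ)`. The minimal polynomial `f` of `θ` over `O_K` divides `X^n - θ^n`, so `f'(θ)` divides
`n θ^{n-1}`, which is a unit modulo `𝔮` because `n ∣ q - 1`. Since `f'(θ)` lies in the different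
of `O_L / O_K` and every ramified prime divides the different, `𝔮` is unramified over `K`.
-/

theorem isUnit_natCast_of_dvd_card_sub_one {Fq K : Type*} [Field Fq] [Fintype Fq] [Semiring K]
    [Algebra Fq K] {n : ℕ} (h : n ∣ Fintype.card Fq - 1) : IsUnit (n : K) := by
  have hq : ((Fintype.card Fq - 1 : ℕ) : Fq) = -1 := by
    rw [Nat.cast_sub Fintype.card_pos, FiniteField.cast_card_eq_zero, Nat.cast_one, zero_sub]
  have hn : (n : Fq) ≠ 0 := by
    obtain ⟨k, hk⟩ := h
    intro h0
    rw [hk, Nat.cast_mul, h0, zero_mul] at hq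
    exact one_ne_zero (neg_eq_zero.mp hq.symm)
  simpa using hn.isUnit.map (algebraMap Fq K)

theorem Nat.div_gcd_mul_eq_mul_div_gcd (t a : ℕ) : a / t.gcd a * t = a * (t / t.gcd a) :=
  (Nat.div_mul_right_comm (Nat.gcd_dvd_right t a) t).trans
    (Nat.mul_div_assoc a (Nat.gcd_dvd_left t a))

theorem Polynomial.not_dvd_prod_pow_of_injective {K ι : Type*} [Field K] {P : ι → K[X]}
    (hmonic : ∀ i, (P i).Monic) (hirr : ∀ i, Irreducible (P i)) (hinj : Function.Injective P)
    (α : ι → ℕ) {s : Finset ι} {i : ι} (hi : i ∉ s) : ¬ P i ∣ ∏ j ∈ s, P j ^ α j := by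
  intro h
  obtain ⟨j, hj, hdvd⟩ := (hirr i).prime.exists_mem_finset_dvd h
  have hij := eq_of_monic_of_associated (hmonic i) (hmonic j)
    ((hirr i).associated_of_dvd (hirr j) ((hirr i).prime.dvd_of_dvd_pow hdvd))
  exact hi (hinj hij ▸ hj)

theorem Ideal.IsPrime.notMem_of_pow_eq_mul_pow {B : Type*} [CommRing B] {𝔮 : Ideal B}
    (h𝔮 : 𝔮.IsPrime) {x u e : B} {N k : ℕ} (hN : N ≠ 0) (hx : x ^ N = u * e ^ k)
    (hu : IsUnit u) (he : e ∉ 𝔮) : x ∉ 𝔮 := by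
  intro hx𝔮
  rcases h𝔮.mem_or_mem (hx ▸ 𝔮.pow_mem_of_mem hx𝔮 N (Nat.pos_of_ne_zero hN)) with h | h
  · exact h𝔮.ne_top (𝔮.eq_top_of_isUnit_mem h hu)
  · exact he (h𝔮.mem_of_pow_mem k h)

theorem mul_div_pow_eq_of_pow_eq {L : Type*} [Field L] {ξ β a b π e : L} {n t m α : ℕ}
    (hξ : ξ ^ n = a * π ^ m) (hβ : β ^ t = b * π ^ α * e) (hmt : m * t = α * n)
    (ht : t ≠ 0) (hπ : π ≠ 0) (he : e ≠ 0) (hβ0 : β ≠ 0) :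
    (ξ * e / β) ^ (n * t) = b⁻¹ ^ n * a ^ t * e ^ (n * (t - 1)) := by
  have hb : b ≠ 0 := by
    rintro rfl
    exact pow_ne_zero t hβ0 (by rw [hβ, zero_mul, zero_mul])
  suffices h : (ξ * e / β) ^ (n * t) * b ^ n = a ^ t * e ^ (n * (t - 1)) by
    rw [mul_assoc, ← h, inv_pow, mul_comm _ (b ^ n), inv_mul_cancel_left₀ (pow_ne_zero n hb)]
  have hθβ : (ξ * e / β) ^ (n * t) * β ^ (n * t) = ξ ^ (n * t) * e ^ (n * t) := by
    rw [← mul_pow, div_mul_cancel₀ _ hβ0, mul_pow]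
  have hβnt : β ^ (n * t) = (b * π ^ α * e) ^ n := by rw [mul_comm, pow_mul, hβ]
  have hξnt : ξ ^ (n * t) = a ^ t * π ^ (α * n) := by rw [pow_mul, hξ, mul_pow, ← pow_mul, hmt]
  have het : e ^ (n * t) = e ^ (n * (t - 1)) * e ^ n := by
    rw [← pow_add, ← Nat.mul_add_one, Nat.sub_add_cancel (Nat.one_le_iff_ne_zero.mpr ht)]
  refine mul_right_cancel₀ (mul_ne_zero (pow_ne_zero (α * n) hπ) (pow_ne_zero n he)) ?_
  rw [hβnt, hξnt, het] at hθβ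
  linear_combination hθβ

theorem isSeparable_of_pow_eq_algebraMap {R F L : Type*} [CommRing R] [IsDomain R] [Field F]
    [Algebra R F] [IsFractionRing R F] [Field L] [Algebra R L] [Algebra F L] [IsScalarTower R F L]
    {x : L} {n : ℕ} {c : R} (hn : IsUnit (n : R)) (hc : c ≠ 0)
    (hx : x ^ n = algebraMap R L c) : IsSeparable F x := by
  have hnF : (n : F) ≠ 0 := by simpa using (hn.map (algebraMap R F)).ne_zero
  have hcF : algebraMap R F c ≠ 0 := (map_ne_zero_iff _ (IsFractionRing.injective R F)).mpr hc
  refine (separable_X_pow_sub_C _ hnF hcF).of_dvd (minpoly.dvd F x ?_)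
  simp [hx, ← IsScalarTower.algebraMap_apply]

theorem finiteDimensional_and_isSeparable_of_adjoin_eq_top {F L : Type*} [Field F] [Field L]
    [Algebra F L] {S : Set L} (hS : S.Finite) (hsep : ∀ x ∈ S, IsSeparable F x)
    (htop : IntermediateField.adjoin F S = ⊤) :
    FiniteDimensional F L ∧ Algebra.IsSeparable F L := by
  have : Finite S := hS.to_subtype
  have hfin := IntermediateField.finiteDimensional_adjoin fun x hx => (hsep x hx).isIntegral
  have hsep' := (IntermediateField.isSeparable_adjoin_iff_isSeparable F L).mpr hsep
  rw [htop] at hfin hsep'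
  exact ⟨IntermediateField.topEquiv.toLinearEquiv.finiteDimensional,
    (IntermediateField.isSeparable_top F L).mp hsep'⟩

section Different

variable {A B K L : Type*} [CommRing A] [CommRing B] [Field K] [Field L]
  [Algebra A B] [Algebra A K] [Algebra B L] [Algebra K L] [Algebra A L]
  [IsScalarTower A K L] [IsScalarTower A B L]

theorem aeval_derivative_minpoly_notMem_of_pow_eq [IsDomain A] [IsIntegrallyClosed A]
    [IsDomain B] [Module.IsTorsionFree A B] {θ : B} (hθ : IsIntegral A θ) {n : ℕ} {w : A}
    (hθn : θ ^ n = algebraMap A B w) {𝔮 : Ideal B} [𝔮.IsPrime] (hn : (n : B) ∉ 𝔮)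
    (hθ𝔮 : θ ∉ 𝔮) : aeval θ (derivative (minpoly A θ)) ∉ 𝔮 := by
  obtain ⟨g, hg⟩ : minpoly A θ ∣ X ^ n - C w :=
    minpoly.isIntegrallyClosed_dvd hθ (by simp [hθn])
  have hderiv : (n : B) * θ ^ (n - 1) = aeval θ (derivative (minpoly A θ)) * aeval θ g := by
    simpa [derivative_X_pow] using congrArg (fun f => aeval θ (derivative f)) hg
  intro hmem
  have : (n : B) * θ ^ (n - 1) ∈ 𝔮 := hderiv ▸ 𝔮.mul_mem_right _ hmem
  rcases Ideal.IsPrime.mem_or_mem ‹_› this with h | h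
  · exact hn h
  · exact hθ𝔮 (Ideal.IsPrime.mem_of_pow_mem ‹_› _ h)

variable [IsDedekindDomain A] [IsDedekindDomain B] [IsFractionRing A K] [IsFractionRing B L]
  [Module.IsTorsionFree A B] [Module.Finite A B] [FiniteDimensional K L]
  [Algebra.IsSeparable K L]

theorem ramificationIdx'_eq_one_of_aeval_derivative_minpoly_notMem {θ : B}
    (hgen : Algebra.adjoin K {algebraMap B L θ} = ⊤) {𝔮 : Ideal B} [𝔮.IsPrime]
    (h𝔮 : 𝔮 ≠ ⊥) (hθ : aeval θ (derivative (minpoly A θ)) ∉ 𝔮) :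
    Ideal.ramificationIdx' (𝔮.comap (algebraMap A B)) 𝔮 = 1 := by
  set 𝔭 := 𝔮.comap (algebraMap A B)
  have h𝔭 : 𝔭 ≠ ⊥ := fun h => h𝔮 (Ideal.eq_bot_of_comap_eq_bot h)
  have : 𝔭.IsMaximal := Ideal.IsPrime.isMaximal inferInstance h𝔭
  have he : Ideal.ramificationIdx' 𝔭 𝔮 ≠ 0 :=
    Ideal.IsDedekindDomain.ramificationIdx'_ne_zero
      ((Ideal.map_eq_bot_iff_of_injective (FaithfulSMul.algebraMap_injective A B)).not.mpr h𝔭)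
      inferInstance Ideal.map_comap_le
  by_contra he1
  have hdiff : 𝔮 ∣ differentIdeal A B :=
    (dvd_pow_self 𝔮 (by omega)).trans <| pow_sub_one_dvd_differentIdeal_aux A K L 𝔮 he h𝔭
      (Ideal.dvd_iff_le.mpr Ideal.le_pow_ramificationIdx')
  exact hθ (Ideal.dvd_iff_le.mp hdiff (aeval_derivative_mem_differentIdeal A K L θ hgen))

end Different

section IntegralClosureTower

variable (R K L : Type*) [CommRing R] [Field K] [Field L] [Algebra R K] [Algebra R L]
  [Algebra K L] [IsScalarTower R K L]

noncomputable abbrev integralClosureAlgebra :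
    Algebra (integralClosure R K) (integralClosure R L) :=
  (icMap R K L).toAlgebra

attribute [local instance] integralClosureAlgebra

instance : IsScalarTower (integralClosure R K) (integralClosure R L) L :=
  .of_algebraMap_eq fun _ => rfl

instance : IsScalarTower R (integralClosure R K) (integralClosure R L) :=
  .of_algebraMap_eq fun x => Subtype.ext (IsScalarTower.algebraMap_apply R K L x)

instance : Module.IsTorsionFree (integralClosure R K) (integralClosure R L) :=
  Module.isTorsionFree_iff_algebraMap_injective.mpr fun _ _ hxy =>
    Subtype.ext ((algebraMap K L).injective (congrArg Subtype.val hxy))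

theorem ramificationIdxOfHom_icMap_eq_one_of_pow_eq {R : Type*} (F : Type*) {K L : Type*}
    [CommRing R] [IsDedekindDomain R] [Field F] [Algebra R F] [IsFractionRing R F] [Field K]
    [Field L] [Algebra F K] [Algebra F L] [Algebra K L] [IsScalarTower F K L] [Algebra R K]
    [Algebra R L] [IsScalarTower R F K] [IsScalarTower R F L] [IsScalarTower R K L]
    [FiniteDimensional F L] [Algebra.IsSeparable F L] {θ : L} (hθ : IsIntegral R θ)
    (hgen : IntermediateField.adjoin K {θ} = ⊤) {n : ℕ} {k : K} (hθn : θ ^ n = algebraMap K L k)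
    (𝔮 : Ideal (integralClosure R L)) [𝔮.IsPrime] (h𝔮 : 𝔮 ≠ ⊥)
    (hn : (n : integralClosure R L) ∉ 𝔮) (hθ𝔮 : ⟨θ, hθ⟩ ∉ 𝔮) :
    ramificationIdxOfHom (icMap R K L) (𝔮.comap (icMap R K L)) 𝔮 = 1 := by
  have : FiniteDimensional F K := FiniteDimensional.left F K L
  have : FiniteDimensional K L := FiniteDimensional.right F K L
  have : Algebra.IsSeparable F K := Algebra.isSeparable_tower_bot_of_isSeparable F K L
  have : Algebra.IsSeparable K L := Algebra.isSeparable_tower_top_of_isSeparable F K L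
  have : IsFractionRing (integralClosure R K) K :=
    integralClosure.isFractionRing_of_finite_extension F K
  have : IsFractionRing (integralClosure R L) L :=
    integralClosure.isFractionRing_of_finite_extension F L
  have : IsDedekindDomain (integralClosure R K) := integralClosure.isDedekindDomain R F K
  have : IsDedekindDomain (integralClosure R L) := integralClosure.isDedekindDomain R F L
  have : Module.Finite R (integralClosure R L) := IsIntegralClosure.finite R F L _
  have : Module.Finite (integralClosure R K) (integralClosure R L) :=
    .of_restrictScalars_finite R _ _
  have hk : IsIntegral R k :=
    (isIntegral_algebraMap_iff (algebraMap K L).injective).mp (hθn ▸ hθ.pow n)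
  have hθn' : (⟨θ, hθ⟩ : integralClosure R L) ^ n =
      algebraMap _ _ (⟨k, hk⟩ : integralClosure R K) := Subtype.ext hθn
  have hgen' : Algebra.adjoin K {algebraMap (integralClosure R L) L ⟨θ, hθ⟩} = ⊤ := by
    change Algebra.adjoin K {θ} = ⊤
    rw [← IntermediateField.adjoin_simple_toSubalgebra_of_isAlgebraic
      (Algebra.IsAlgebraic.isAlgebraic θ), hgen, IntermediateField.top_toSubalgebra]
  have hθint : IsIntegral (integralClosure R K) (⟨θ, hθ⟩ : integralClosure R L) :=
    Algebra.IsIntegral.isIntegral _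
  exact ramificationIdx'_eq_one_of_aeval_derivative_minpoly_notMem (K := K) hgen' h𝔮
    (aeval_derivative_minpoly_notMem_of_pow_eq hθint hθn' hn hθ𝔮)

end IntegralClosureTower

theorem ramificationIdxOfHom_icMap_eq_one_of_kummer {R : Type*} (F : Type*) {K L : Type*}
    [CommRing R] [IsDedekindDomain R] [Field F] [Algebra R F] [IsFractionRing R F] [Field K]
    [Field L] [Algebra F K] [Algebra F L] [Algebra K L] [IsScalarTower F K L] [Algebra R K]
    [Algebra R L] [IsScalarTower R F K] [IsScalarTower R F L] [IsScalarTower R K L]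
    [FiniteDimensional F L] [Algebra.IsSeparable F L] {β : K} {ξ : L} {n t m α : ℕ}
    {a b π e : R} (ha : IsUnit a) (hb : IsUnit b) (hπ : π ≠ 0) (ht : t ≠ 0)
    (hξ : ξ ^ n = algebraMap R L (a * π ^ m)) (hβ : β ^ t = algebraMap R K (b * π ^ α * e))
    (hmt : m * t = α * n) (hgen : IntermediateField.adjoin K {ξ} = ⊤)
    (𝔮 : Ideal (integralClosure R L)) [𝔮.IsPrime]
    (hπ𝔮 : algebraMap R (integralClosure R L) π ∈ 𝔮)
    (hn : IsUnit (n : R)) (he : algebraMap R (integralClosure R L) e ∉ 𝔮) :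
    ramificationIdxOfHom (icMap R K L) (𝔮.comap (icMap R K L)) 𝔮 = 1 := by
  have hinj : Function.Injective (algebraMap R L) := by
    simpa [IsScalarTower.algebraMap_eq R F L] using
      (algebraMap F L).injective.comp (IsFractionRing.injective R F)
  have hn𝔮 : (n : integralClosure R L) ∉ 𝔮 := fun h =>
    Ideal.IsPrime.ne_top ‹_› (𝔮.eq_top_of_isUnit_mem h (by simpa using hn.map (algebraMap R _)))
  have hnt : 0 < n * t := Nat.pos_of_ne_zero (mul_ne_zero (by rintro rfl; simp at hn𝔮) ht)
  have h𝔮 : 𝔮 ≠ ⊥ := by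
    rintro rfl
    exact hπ (hinj (by simpa using congrArg Subtype.val ((Ideal.mem_bot).mp hπ𝔮)))
  have he0 : e ≠ 0 := by rintro rfl; exact he (by simp)
  have hβL : algebraMap K L β ^ t = algebraMap R L (b * π ^ α * e) := by
    rw [← map_pow, hβ, ← IsScalarTower.algebraMap_apply]
  have hβ0 : algebraMap K L β ≠ 0 := by
    refine (pow_ne_zero_iff ht).mp ?_
    rw [hβL, map_ne_zero_iff _ hinj]
    exact mul_ne_zero (mul_ne_zero hb.ne_zero (pow_ne_zero _ hπ)) he0
  have he0L : algebraMap R L e ≠ 0 := (map_ne_zero_iff _ hinj).mpr he0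
  obtain ⟨u, rfl⟩ := hb
  set θ := ξ * algebraMap R L e / algebraMap K L β with hθ
  have hθpow : θ ^ (n * t) = algebraMap R L (↑u⁻¹ ^ n * a ^ t * e ^ (n * (t - 1))) := by
    rw [mul_div_pow_eq_of_pow_eq (by simpa using hξ) (by simpa using hβL) hmt ht
      ((map_ne_zero_iff _ hinj).mpr hπ) he0L hβ0]
    simp only [map_mul, map_pow, map_units_inv]
  have hθint : IsIntegral R θ := IsIntegral.of_pow hnt (hθpow ▸ isIntegral_algebraMap)
  have hθn : θ ^ n = algebraMap K L (algebraMap R K (a * π ^ m * e ^ n) / β ^ n) := by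
    rw [map_div₀, map_pow, ← IsScalarTower.algebraMap_apply, map_mul, ← hξ, hθ, div_pow,
      mul_pow, map_pow]
  have hgenθ : IntermediateField.adjoin K {θ} = ⊤ := by
    rw [eq_top_iff, ← hgen, IntermediateField.adjoin_simple_le_iff]
    have hξθ : ξ = algebraMap K L (β / algebraMap R K e) * θ := by
      rw [hθ, map_div₀, ← IsScalarTower.algebraMap_apply]
      field_simp
    rw [hξθ]
    exact mul_mem (IntermediateField.algebraMap_mem _ _)
      (IntermediateField.mem_adjoin_simple_self K θ)
  have hθ𝔮 : ⟨θ, hθint⟩ ∉ 𝔮 :=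
    Ideal.IsPrime.notMem_of_pow_eq_mul_pow ‹_› hnt.ne' (by ext1; simpa [mul_assoc] using hθpow)
      (((u⁻¹.isUnit.pow n).mul (ha.pow t)).map (algebraMap R _)) he
  exact ramificationIdxOfHom_icMap_eq_one_of_pow_eq F hθint hgenθ hθn 𝔮 h𝔮 hn𝔮 hθ𝔮

theorem kummer_adjoin_unramified_over_P_general
    (Fq : Type*) [Field Fq] [Fintype Fq]
    (t : ℕ) (htq : t ∣ Fintype.card Fq - 1)
    (r : ℕ) (P : Fin r → Polynomial Fq)
    (hPmonic : ∀ i, (P i).Monic) (hPirr : ∀ i, Irreducible (P i))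
    (hPdist : Function.Injective P)
    (α : Fin r → ℕ)
    (D : Polynomial Fq) (hD : D = ∏ i, P i ^ α i)
    (γ : Fq) (hγ : γ = (-1) ^ D.natDegree)
    (L : Type*) [Field L] [Algebra (Polynomial Fq) L] [Algebra (RatFunc Fq) L]
    [IsScalarTower (Polynomial Fq) (RatFunc Fq) L]
    (β : L) (hβ : β ^ t = algebraMap (Polynomial Fq) L (C γ * D))
    (K : IntermediateField (RatFunc Fq) L)
    (hK : K = IntermediateField.adjoin (RatFunc Fq) {β})
    (i : Fin r)
    (γi : Fq) (hγi : γi = (-1) ^ ((α i / Nat.gcd t (α i)) * (P i).natDegree))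
    (ξ : L) (hξ : ξ ^ (t / Nat.gcd t (α i))
      = algebraMap (Polynomial Fq) L (C γi * P i ^ (α i / Nat.gcd t (α i))))
    (hgenL : IntermediateField.adjoin (RatFunc Fq) {β, ξ} = ⊤)
    (𝔮 : Ideal (integralClosure (Polynomial Fq) L)) (h𝔮 : 𝔮.IsPrime)
    (hlies : Ideal.comap (algebraMap (Polynomial Fq) (integralClosure (Polynomial Fq) L)) 𝔮
      = Ideal.span {P i}) :
    ramificationIdxOfHom (icMapIF Fq L K)
      (Ideal.comap (icMapIF Fq L K) 𝔮) 𝔮 = 1 := by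
  set E := ∏ j ∈ Finset.univ.erase i, P j ^ α j
  have hnR : IsUnit ((t / t.gcd (α i) : ℕ) : Polynomial Fq) :=
    isUnit_natCast_of_dvd_card_sub_one ((Nat.div_dvd_of_dvd (Nat.gcd_dvd_left _ _)).trans htq)
  have htR : IsUnit (t : Polynomial Fq) := isUnit_natCast_of_dvd_card_sub_one htq
  have hγu : IsUnit (C γ) := isUnit_C.mpr (hγ ▸ isUnit_neg_one.pow _)
  have hγiu : IsUnit (C γi) := isUnit_C.mpr (hγi ▸ isUnit_neg_one.pow _)
  have hD0 : D ≠ 0 := hD ▸ Finset.prod_ne_zero_iff.mpr fun j _ => pow_ne_zero _ (hPirr j).ne_zero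
  have hsepβ : IsSeparable (RatFunc Fq) β :=
    isSeparable_of_pow_eq_algebraMap htR (mul_ne_zero hγu.ne_zero hD0) hβ
  have hsepξ : IsSeparable (RatFunc Fq) ξ := isSeparable_of_pow_eq_algebraMap hnR
    (mul_ne_zero hγiu.ne_zero (pow_ne_zero _ (hPirr i).ne_zero)) hξ
  obtain ⟨_, _⟩ := finiteDimensional_and_isSeparable_of_adjoin_eq_top (Set.toFinite _)
    (by rintro x (rfl | rfl) <;> assumption) hgenL
  have hβK : β ∈ K := hK ▸ IntermediateField.mem_adjoin_simple_self _ β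
  have hDE : D = P i ^ α i * E := hD ▸ (Finset.mul_prod_erase _ _ (Finset.mem_univ i)).symm
  have hβE : (⟨β, hβK⟩ : K) ^ t = algebraMap (Polynomial Fq) K (C γ * P i ^ α i * E) := by
    ext1
    change β ^ t = algebraMap (Polynomial Fq) L _
    rw [hβ, hDE, mul_assoc]
  have hgen : IntermediateField.adjoin K {ξ} = ⊤ := by
    subst hK
    apply IntermediateField.restrictScalars_injective (RatFunc Fq)
    rw [IntermediateField.adjoin_simple_adjoin_simple, hgenL, IntermediateField.restrictScalars_top]
  have hmem (x : Polynomial Fq) : algebraMap _ _ x ∈ 𝔮 ↔ P i ∣ x := by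
    rw [← Ideal.mem_comap, hlies, Ideal.mem_span_singleton]
  have hPE : ¬ P i ∣ E := Polynomial.not_dvd_prod_pow_of_injective hPmonic hPirr hPdist α
    (Finset.notMem_erase i _)
  have : IsScalarTower (Polynomial Fq) K L := .of_algebraMap_eq fun _ => rfl
  exact ramificationIdxOfHom_icMap_eq_one_of_kummer (RatFunc Fq) hγiu hγu (hPirr i).ne_zero
    (by rintro rfl; simp at htR) hξ hβE (Nat.div_gcd_mul_eq_mul_div_gcd t (α i)) hgen 𝔮
    ((hmem _).mpr dvd_rfl) hnR ((hmem E).not.mpr hPE)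

/-- With `K = k(β)` a Kummer extension given by `β^t = γD`, fix `i`,
set `d_i = gcd(t, α_i)`, `γ_i = (−1)^{(α_i/d_i)·deg P_i}`, and let `ξ` be a root of
`X^{t/d_i} − γ_i·P_i^{α_i/d_i}`. Then `K(ξ)/K` is unramified over `P_i`: every prime of
the integral closure of `𝔽_q[T]` in `K(ξ)` lying over `P_i` has ramification index `1`
over the prime of `O_K` below it. -/
theorem kummer_adjoin_unramified_over_P
    (Fq : Type*) [Field Fq] [Fintype Fq]
    (t : ℕ) (ht2 : 2 ≤ t) (htq : t ∣ Fintype.card Fq - 1)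
    (r : ℕ) (P : Fin r → Polynomial Fq)
    (hPmonic : ∀ i, (P i).Monic) (hPirr : ∀ i, Irreducible (P i))
    (hPdist : Function.Injective P)
    (α : Fin r → ℕ) (hα1 : ∀ i, 1 ≤ α i) (hα2 : ∀ i, α i ≤ t - 1)
    (D : Polynomial Fq) (hD : D = ∏ i, P i ^ α i)
    (γ : Fq) (hγ : γ = (-1) ^ D.natDegree)
    (hirr : Irreducible
      (X ^ t - C (algebraMap (Polynomial Fq) (RatFunc Fq) (C γ * D)) : Polynomial (RatFunc Fq)))
    (L : Type*) [Field L] [Algebra (Polynomial Fq) L] [Algebra (RatFunc Fq) L]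
    [IsScalarTower (Polynomial Fq) (RatFunc Fq) L]
    (β : L) (hβ : β ^ t = algebraMap (Polynomial Fq) L (C γ * D))
    (K : IntermediateField (RatFunc Fq) L)
    (hK : K = IntermediateField.adjoin (RatFunc Fq) {β})
    (i : Fin r)
    (γi : Fq) (hγi : γi = (-1) ^ ((α i / Nat.gcd t (α i)) * (P i).natDegree))
    (ξ : L) (hξ : ξ ^ (t / Nat.gcd t (α i))
      = algebraMap (Polynomial Fq) L (C γi * P i ^ (α i / Nat.gcd t (α i))))
    (hgenL : IntermediateField.adjoin (RatFunc Fq) {β, ξ} = ⊤)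
    (𝔮 : Ideal (integralClosure (Polynomial Fq) L)) (h𝔮 : 𝔮.IsPrime)
    (hlies : Ideal.comap (algebraMap (Polynomial Fq) (integralClosure (Polynomial Fq) L)) 𝔮
      = Ideal.span {P i}) :
    ramificationIdxOfHom (icMapIF Fq L K)
      (Ideal.comap (icMapIF Fq L K) 𝔮) 𝔮 = 1 :=
  kummer_adjoin_unramified_over_P_general Fq t htq r P hPmonic hPirr hPdist α D hD γ hγ L β hβ K hK
    i γi hγi ξ hξ hgenL 𝔮 h𝔮 hlies
end

section
/- Let p be a prime, q = p^l, and u a divisor of l (so that 𝔽_{p^u} ⊆ 𝔽_q). Let k = 𝔽_q(T), let P ∈ 𝔽_q[T] be monic irreducible, and let α ∈ k be an element of the localization of 𝔽_q[T] at the prime ideal (P) (i.e. α is P-integral). Let y be a root of X^{p^u} − X − α in an algebraic closure of k and set K = k(y). Then every prime of O_K lying over P has ramification index 1 over P. -/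
/-!
Write `α = a / b` with `P ∤ b` and `n = p ^ u`. Then `x = b * y` is a root of the monic
`F = X ^ n - b ^ (n - 1) * X - b ^ (n - 1) * a ∈ 𝔽_q[T][X]`, so it lies in `O_K` and generates
`K` over `k`. In characteristic `p` the derivative `F' = -b ^ (n - 1)` is a constant, and since
the minimal polynomial of `x` divides `F`, `F'(x)` lies in the different ideal of `O_K / 𝔽_q[T]`.
A prime `𝔭` with `e(𝔭 | P) ≥ 2` divides the different, so it would contain `b ^ (n - 1)`,
forcing `P ∣ b`.
-/

open Polynomial

attribute [local instance] FractionRing.liftAlgebra FractionRing.isScalarTower_liftAlgebra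

namespace Polynomial

variable {R : Type*} [CommRing R] {n : ℕ}

theorem monic_X_pow_sub_C_mul_X_sub_C (hn : 1 < n) (c d : R) :
    (X ^ n - C c * X - C d).Monic := by
  rw [sub_sub]
  exact monic_X_pow_sub (degree_linear_le.trans_lt (by exact_mod_cast hn))

theorem derivative_X_pow_sub_C_mul_X_sub_C (hn : (n : R) = 0) (c d : R) :
    derivative (X ^ n - C c * X - C d) = -C c := by
  simp [derivative_X_pow, hn]

theorem separable_X_pow_sub_C_mul_X_sub_C (hn : (n : R) = 0) {c : R} (hc : IsUnit c) (d : R) :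
    (X ^ n - C c * X - C d).Separable := by
  rw [separable_def, derivative_X_pow_sub_C_mul_X_sub_C hn, IsCoprime.neg_right_iff]
  simpa using (isCoprime_mul_unit_right_right (hc.map C) _ 1).mpr isCoprime_one_right

end Polynomial

theorem aeval_algebraMap_mul_eq_zero_of_mul_pow_sub_self_eq {A S : Type*} [CommRing A]
    [CommRing S] [Algebra A S] {n : ℕ} (hn : n ≠ 0) {y : S} {a b : A}
    (hy : algebraMap A S b * (y ^ n - y) = algebraMap A S a) :
    aeval (algebraMap A S b * y) (X ^ n - C (b ^ (n - 1)) * X - C (b ^ (n - 1) * a)) = 0 := by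
  have hbn : algebraMap A S b ^ n = algebraMap A S b ^ (n - 1) * algebraMap A S b := by
    rw [← pow_succ, Nat.sub_add_cancel (Nat.one_le_iff_ne_zero.mpr hn)]
  simp only [map_sub, map_mul, map_pow, aeval_X, aeval_C]
  linear_combination algebraMap A S b ^ (n - 1) * hy + y ^ n * hbn

theorem Algebra.adjoin_singleton_algebraMap_mul {K L : Type*} [Field K] [CommRing L]
    [Algebra K L] {c : K} (hc : c ≠ 0) (y : L) :
    Algebra.adjoin K {algebraMap K L c * y} = Algebra.adjoin K {y} := by
  refine le_antisymm ?_ ?_ <;> rw [Algebra.adjoin_le_iff, Set.singleton_subset_iff]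
  · exact Subalgebra.mul_mem _ (Subalgebra.algebraMap_mem _ c)
      (Algebra.self_mem_adjoin_singleton K y)
  · have h := Subalgebra.mul_mem _ (Subalgebra.algebraMap_mem _ c⁻¹)
      (Algebra.self_mem_adjoin_singleton K (algebraMap K L c * y))
    rwa [← mul_assoc, ← map_mul, inv_mul_cancel₀ hc, map_one, one_mul] at h

theorem Algebra.isSeparable_of_adjoin_simple_eq_top {K L : Type*} [Field K] [Field L]
    [Algebra K L] {y : L} (hgen : IntermediateField.adjoin K {y} = ⊤) (hy : IsSeparable K y) :
    Algebra.IsSeparable K L :=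
  (separableClosure.eq_top_iff K L).mp <| top_unique <|
    hgen ▸ IntermediateField.adjoin_simple_le_iff.mpr (mem_separableClosure_iff.mpr hy)

theorem Ideal.ramificationIdx'_eq_one_of_not_dvd_differentIdeal {A B : Type*} [CommRing A]
    [IsDedekindDomain A] [CommRing B] [IsDedekindDomain B] [Algebra A B]
    [Module.IsTorsionFree A B] [Module.Finite A B]
    [Algebra.IsSeparable (FractionRing A) (FractionRing B)] {p : Ideal A} [p.IsMaximal]
    (hp : p ≠ ⊥) {P : Ideal B} (hpP : p.map (algebraMap A B) ≤ P)
    (hP : ¬ P ∣ differentIdeal A B) : p.ramificationIdx' P = 1 := by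
  by_contra he
  have hP2 : P ^ 2 ∣ p.map (algebraMap A B) :=
    Ideal.dvd_iff_le.mpr ((Ideal.ramificationIdx'_ne_one_iff hpP).mp he)
  exact hP (by simpa using pow_sub_one_dvd_differentIdeal A P 2 hp hP2)

theorem IsIntegralClosure.isSeparable_fractionRing (A K L B : Type*) [CommRing A] [IsDomain A]
    [Field K] [Algebra A K] [IsFractionRing A K] [Field L] [Algebra K L] [Algebra A L]
    [IsScalarTower A K L] [FiniteDimensional K L] [Algebra.IsSeparable K L]
    [CommRing B] [IsDomain B] [Algebra B L] [Algebra A B] [IsScalarTower A B L]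
    [Module.IsTorsionFree A B] [IsIntegralClosure B A L] :
    Algebra.IsSeparable (FractionRing A) (FractionRing B) := by
  have := IsIntegralClosure.isFractionRing_of_finite_extension A K L B
  refine Algebra.IsSeparable.of_equiv_equiv (FractionRing.algEquiv A K).symm.toRingEquiv
    (FractionRing.algEquiv B L).symm.toRingEquiv ?_
  ext
  exact IsFractionRing.algEquiv_commutes (FractionRing.algEquiv A K).symm
    (FractionRing.algEquiv B L).symm _

theorem aeval_derivative_mem_differentIdeal_of_aeval_eq_zero (A K : Type*) {L B : Type*}
    [CommRing A] [IsDedekindDomain A] [Field K] [Algebra A K] [IsFractionRing A K] [Field L]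
    [Algebra K L] [Algebra A L] [IsScalarTower A K L] [FiniteDimensional K L]
    [Algebra.IsSeparable K L] [CommRing B] [IsDedekindDomain B] [Algebra B L] [Algebra A B]
    [IsScalarTower A B L] [Module.IsTorsionFree A B] [IsIntegralClosure B A L] {x : B}
    (hx : Algebra.adjoin K {algebraMap B L x} = ⊤) {f : A[X]} (hf : aeval x f = 0) :
    aeval x (derivative f) ∈ differentIdeal A B := by
  obtain ⟨g, rfl⟩ := minpoly.isIntegrallyClosed_dvd (IsIntegralClosure.isIntegral A L x) hf
  rw [derivative_mul, map_add, map_mul, map_mul, minpoly.aeval, zero_mul, add_zero]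
  exact Ideal.mul_mem_right _ _ (aeval_derivative_mem_differentIdeal A K L x hx)

section IntegralClosure

variable {A K L : Type*} [CommRing A] [IsDedekindDomain A] [Field K] [Algebra A K]
  [IsFractionRing A K] [Field L] [Algebra K L] [Algebra A L] [IsScalarTower A K L]

theorem integralClosure.ramificationIdx'_eq_one_of_aeval_derivative_notMem
    [FiniteDimensional K L] [Algebra.IsSeparable K L]
    {x : integralClosure A L} (hx : Algebra.adjoin K {(x : L)} = ⊤) {f : A[X]}
    (hf : aeval x f = 0) {p : Ideal A} [p.IsMaximal] (hp : p ≠ ⊥)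
    {P : Ideal (integralClosure A L)} (hpP : p.map (algebraMap A _) ≤ P)
    (hfP : aeval x (derivative f) ∉ P) : p.ramificationIdx' P = 1 := by
  have : Module.IsTorsionFree A L := Module.isTorsionFree_iff_algebraMap_injective.mpr <| by
    rw [IsScalarTower.algebraMap_eq A K L]
    exact (algebraMap K L).injective.comp (IsFractionRing.injective A K)
  have := integralClosure.isDedekindDomain A K L
  have : Module.IsTorsionFree A (integralClosure A L) := IsIntegralClosure.isTorsionFree A L
  have := IsIntegralClosure.finite A K L (integralClosure A L)
  have := IsIntegralClosure.isSeparable_fractionRing A K L (integralClosure A L)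
  have hmem :=
    aeval_derivative_mem_differentIdeal_of_aeval_eq_zero A K (B := integralClosure A L) hx hf
  exact Ideal.ramificationIdx'_eq_one_of_not_dvd_differentIdeal hp hpP
    fun hdvd ↦ hfP (Ideal.le_of_dvd hdvd hmem)

theorem ramificationIdx'_eq_one_of_pow_sub_self_eq {n : ℕ} (hn : 1 < n) (hnA : (n : A) = 0)
    {a b : A} {α : K} (hα : α = algebraMap A K a / algebraMap A K b) {y : L}
    (hy : y ^ n - y = algebraMap K L α) (hgen : IntermediateField.adjoin K {y} = ⊤)
    {p : Ideal A} [p.IsMaximal] (hp : p ≠ ⊥) (hb : b ∉ p)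
    {P : Ideal (integralClosure A L)} [P.IsPrime] (hpP : p.map (algebraMap A _) ≤ P) :
    p.ramificationIdx' P = 1 := by
  have hb0 : algebraMap A K b ≠ 0 :=
    (map_ne_zero_iff _ (IsFractionRing.injective A K)).mpr fun h ↦ hb (h ▸ p.zero_mem)
  have hnK : (n : K) = 0 := by rw [← map_natCast (algebraMap A K), hnA, map_zero]
  have hyroot : aeval y (X ^ n - C 1 * X - C α) = 0 := by simp [← hy]
  have hyint : IsIntegral K y := ⟨_, monic_X_pow_sub_C_mul_X_sub_C hn 1 α, hyroot⟩
  have hadj : Algebra.adjoin K {y} = ⊤ :=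
    Algebra.adjoin_eq_top_of_primitive_element hyint.isAlgebraic hgen
  have : FiniteDimensional K L := (PowerBasis.ofAdjoinEqTop hyint hadj).finite
  have : Algebra.IsSeparable K L := Algebra.isSeparable_of_adjoin_simple_eq_top hgen <|
    (separable_X_pow_sub_C_mul_X_sub_C hnK isUnit_one α).of_dvd (minpoly.dvd K y hyroot)
  set F : A[X] := X ^ n - C (b ^ (n - 1)) * X - C (b ^ (n - 1) * a)
  have hFroot : aeval (algebraMap A L b * y) F = 0 := by
    refine aeval_algebraMap_mul_eq_zero_of_mul_pow_sub_self_eq (by omega) ?_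
    rw [hy, hα, IsScalarTower.algebraMap_apply A K L, IsScalarTower.algebraMap_apply A K L a,
      ← map_mul, mul_div_cancel₀ _ hb0]
  let x : integralClosure A L := ⟨_, F, monic_X_pow_sub_C_mul_X_sub_C hn _ _, hFroot⟩
  have hx : Algebra.adjoin K {(x : L)} = ⊤ := by
    show Algebra.adjoin K {algebraMap A L b * y} = ⊤
    rw [IsScalarTower.algebraMap_apply A K L, Algebra.adjoin_singleton_algebraMap_mul hb0, hadj]
  have hxroot : aeval x F = 0 := Subtype.ext ((aeval_subalgebra_coe F _ x).trans hFroot)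
  have hcomap : Ideal.comap (algebraMap A (integralClosure A L)) P = p :=
    (Ideal.IsMaximal.eq_of_le ‹_› Ideal.IsPrime.ne_top' (Ideal.map_le_iff_le_comap.mp hpP)).symm
  refine integralClosure.ramificationIdx'_eq_one_of_aeval_derivative_notMem hx hxroot hp hpP ?_
  rw [derivative_X_pow_sub_C_mul_X_sub_C hnA, map_neg, aeval_C, neg_mem_iff, ← Ideal.mem_comap,
    hcomap]
  exact fun h ↦ hb (Ideal.IsPrime.mem_of_pow_mem inferInstance _ h)

end IntegralClosure

theorem artinSchreier_unramified_of_P_integral_general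
    (p l u : ℕ) (hp : p.Prime) (hl : 0 < l) (hu : u ∣ l)
    (Fq : Type*) [Field Fq] [Fintype Fq] (hq : Fintype.card Fq = p ^ l)
    (P : Polynomial Fq) (hPirr : Irreducible P)
    (α : RatFunc Fq)
    (hα : ∃ a b : Polynomial Fq, ¬ P ∣ b ∧
      α = algebraMap (Polynomial Fq) (RatFunc Fq) a / algebraMap (Polynomial Fq) (RatFunc Fq) b)
    (K : Type*) [Field K] [Algebra (Polynomial Fq) K] [Algebra (RatFunc Fq) K]
    [IsScalarTower (Polynomial Fq) (RatFunc Fq) K]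
    (y : K) (hy : y ^ p ^ u - y = algebraMap (RatFunc Fq) K α)
    (hgen : IntermediateField.adjoin (RatFunc Fq) {y} = ⊤)
    (𝔭 : Ideal (integralClosure (Polynomial Fq) K)) (h𝔭 : 𝔭.IsPrime)
    (hlies : Ideal.comap (algebraMap (Polynomial Fq) (integralClosure (Polynomial Fq) K)) 𝔭
      = Ideal.span {P}) :
    Ideal.ramificationIdx' (S := integralClosure (Polynomial Fq) K)
      (Ideal.span {P}) 𝔭 = 1 := by
  obtain ⟨a, b, hPb, hα⟩ := hα
  have := Fact.mk hp
  have : CharP Fq p := charP_of_card_eq_prime_pow hq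
  have hu0 : u ≠ 0 := by
    rintro rfl
    exact hl.ne' (Nat.eq_zero_of_zero_dvd hu)
  have := PrincipalIdealRing.isMaximal_of_irreducible hPirr
  refine ramificationIdx'_eq_one_of_pow_sub_self_eq (Nat.one_lt_pow hu0 hp.one_lt) ?_ hα hy hgen
    (by simpa using hPirr.ne_zero) (by rwa [Ideal.mem_span_singleton])
    (Ideal.map_le_iff_le_comap.mpr hlies.ge)
  simp [CharP.cast_eq_zero, hu0]

/-- (Schmid's unramifiedness criterion.) Let `q = p^l`, `u ∣ l`,
`k = 𝔽_q(T)`, `P` monic irreducible, and `α ∈ k` a `P`-integral element (a quotient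
`a/b` of polynomials with `P ∤ b`). If `K = k(y)` with `y^{p^u} − y = α`, then every
prime of `O_K` lying over `P` is unramified over `P`. -/
theorem artinSchreier_unramified_of_P_integral
    (p l u : ℕ) (hp : p.Prime) (hl : 0 < l) (hu : u ∣ l)
    (Fq : Type*) [Field Fq] [Fintype Fq] (hq : Fintype.card Fq = p ^ l)
    (P : Polynomial Fq) (hPmonic : P.Monic) (hPirr : Irreducible P)
    (α : RatFunc Fq)
    (hα : ∃ a b : Polynomial Fq, ¬ P ∣ b ∧
      α = algebraMap (Polynomial Fq) (RatFunc Fq) a / algebraMap (Polynomial Fq) (RatFunc Fq) b)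
    (K : Type*) [Field K] [Algebra (Polynomial Fq) K] [Algebra (RatFunc Fq) K]
    [IsScalarTower (Polynomial Fq) (RatFunc Fq) K]
    (y : K) (hy : y ^ p ^ u - y = algebraMap (RatFunc Fq) K α)
    (hgen : IntermediateField.adjoin (RatFunc Fq) {y} = ⊤)
    (𝔭 : Ideal (integralClosure (Polynomial Fq) K)) (h𝔭 : 𝔭.IsPrime)
    (hlies : Ideal.comap (algebraMap (Polynomial Fq) (integralClosure (Polynomial Fq) K)) 𝔭
      = Ideal.span {P}) :
    Ideal.ramificationIdx' (S := integralClosure (Polynomial Fq) K)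
      (Ideal.span {P}) 𝔭 = 1 :=
  artinSchreier_unramified_of_P_integral_general p l u hp hl hu Fq hq P hPirr α hα K y hy hgen 𝔭 h𝔭
    hlies
end

section
/- Let p be a prime and F a field of characteristic p. Let X ∈ F with X ≠ 0, and let λ ∈ F satisfy (λ^p + Xλ)^{p−1} + X = 0. Then λ^{p−1} + X ≠ 0, and the element δ := (λ^{p−1} + X)^{−1} satisfies δ^p − δ = −X^{−1}. -/
/-!
Put `s = λ^{p-1} + X`. Since `λ^{p-1} = s - X`, the relation `(λ(λ^{p-1} + X))^{p-1} + X = 0`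
says exactly that `s` is a root of `T^p - X T^{p-1} + X`. This root is nonzero because `X` is,
and dividing by `X s^p` shows that its reciprocal `δ` satisfies `δ^p - δ = -X⁻¹`.
-/

section

variable {R K : Type*} [CommRing R] [Field K]

lemma carlitz_relation_eq (n : ℕ) (X lam : R) :
    (lam ^ (n + 1) + X * lam) ^ n + X
      = (lam ^ n + X) ^ (n + 1) - X * (lam ^ n + X) ^ n + X := by
  rw [show lam ^ (n + 1) + X * lam = lam * (lam ^ n + X) by ring, mul_pow]
  ring

lemma ne_zero_of_pow_succ_sub_mul_pow_add_eq_zero {n : ℕ} (hn : n ≠ 0) {X s : R} (hX : X ≠ 0)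
    (hs : s ^ (n + 1) - X * s ^ n + X = 0) : s ≠ 0 := by
  rintro rfl
  simp [hn, hX] at hs

lemma inv_pow_succ_sub_inv_of_pow_succ_sub_mul_pow_add_eq_zero {n : ℕ} {X s : K}
    (hX : X ≠ 0) (hs0 : s ≠ 0) (hs : s ^ (n + 1) - X * s ^ n + X = 0) :
    (s⁻¹) ^ (n + 1) - s⁻¹ = -X⁻¹ := by
  rw [inv_pow, pow_succ]
  field_simp
  linear_combination hs

end

theorem artinSchreier_generator_of_carlitz_relation_general
    (p : ℕ) (hp : p.Prime) (F : Type*) [Field F]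
    (X : F) (hX : X ≠ 0) (lam : F)
    (hlam : (lam ^ p + X * lam) ^ (p - 1) + X = 0) :
    lam ^ (p - 1) + X ≠ 0 ∧
      ((lam ^ (p - 1) + X)⁻¹) ^ p - (lam ^ (p - 1) + X)⁻¹ = -X⁻¹ := by
  obtain ⟨n, rfl⟩ : ∃ n, p = n + 1 := Nat.exists_eq_add_one.mpr hp.pos
  have hn : n ≠ 0 := by
    have := hp.one_lt
    omega
  rw [Nat.add_sub_cancel] at hlam ⊢
  rw [carlitz_relation_eq] at hlam
  have hs0 := ne_zero_of_pow_succ_sub_mul_pow_add_eq_zero hn hX hlam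
  exact ⟨hs0, inv_pow_succ_sub_inv_of_pow_succ_sub_mul_pow_add_eq_zero hX hs0 hlam⟩

/-- Let `F` be a field of characteristic `p`, `X ∈ F` nonzero, and
`λ ∈ F` with `(λ^p + Xλ)^{p−1} + X = 0`. Then `λ^{p−1} + X ≠ 0` and
`δ := (λ^{p−1} + X)⁻¹` satisfies `δ^p − δ = −X⁻¹`. -/
theorem artinSchreier_generator_of_carlitz_relation
    (p : ℕ) (hp : p.Prime) (F : Type*) [Field F] [CharP F p]
    (X : F) (hX : X ≠ 0) (lam : F)
    (hlam : (lam ^ p + X * lam) ^ (p - 1) + X = 0) :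
    lam ^ (p - 1) + X ≠ 0 ∧
      ((lam ^ (p - 1) + X)⁻¹) ^ p - (lam ^ (p - 1) + X)⁻¹ = -X⁻¹ :=
  artinSchreier_generator_of_carlitz_relation_general p hp F X hX lam hlam
end
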